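/- A strictly dense set R of rooted triples on a leaf set L with |L| ≥ 3 is consistent if and only if for every two-element subset R' ⊆ R the closure cl(R') is contained in R. -/

import Mathlib

namespace Phylo

/-- Rooted trees with leaves labeled by `L`. -/
inductive T (L : Type) where
  | leaf (x : L) : T L
  | node (ts : List (T L)) : T L

/-- `Subtree s t`: `s` is the subtree of `t` rooted at some vertex of `t`. -/
inductive Subtree {L : Type} : T L → T L → Prop where
  | refl (t : T L) : Subtree t t
  | child {s u : T L} {ts : List (T L)} : s ∈ ts → Subtree u s → Subtree u (T.node ts)

/-- The list of leaf labels of a tree. -/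
def leafList {L : Type} : T L → List L
  | T.leaf x => [x]
  | T.node ts => (ts.attach.map (fun s => leafList s.1)).flatten
decreasing_by all_goals (simp_wf; have := List.sizeOf_lt_of_mem s.2; omega)

/-- A phylogenetic tree: every inner vertex has at least two children. -/
inductive IsPhylo {L : Type} : T L → Prop where
  | leaf (x : L) : IsPhylo (T.leaf x)
  | node {ts : List (T L)} : 2 ≤ ts.length → (∀ t ∈ ts, IsPhylo t) → IsPhylo (T.node ts)

/-- A phylogenetic tree with pairwise distinct leaf labels. -/
def PhyloTree {L : Type} (t : T L) : Prop := IsPhylo t ∧ (leafList t).Nodup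

/-- A binary tree: every inner vertex has exactly two children. -/
inductive BinaryT {L : Type} : T L → Prop where
  | leaf (x : L) : BinaryT (T.leaf x)
  | node {ts : List (T L)} : ts.length = 2 → (∀ t ∈ ts, BinaryT t) → BinaryT (T.node ts)

def numVertices {L : Type} : T L → ℕ
  | T.leaf _ => 1
  | T.node ts => 1 + (ts.attach.map (fun s => numVertices s.1)).sum
decreasing_by all_goals (simp_wf; have := List.sizeOf_lt_of_mem s.2; omega)

def numLeaves {L : Type} : T L → ℕ
  | T.leaf _ => 1
  | T.node ts => (ts.attach.map (fun s => numLeaves s.1)).sum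
decreasing_by all_goals (simp_wf; have := List.sizeOf_lt_of_mem s.2; omega)

def numInner {L : Type} : T L → ℕ
  | T.leaf _ => 0
  | T.node ts => 1 + (ts.attach.map (fun s => numInner s.1)).sum
decreasing_by all_goals (simp_wf; have := List.sizeOf_lt_of_mem s.2; omega)

/-- `C` is a cluster of `t`: the set of leaves below some vertex of `t`. -/
def IsCluster {L : Type} (t : T L) (C : Set L) : Prop :=
  ∃ s, Subtree s t ∧ ∀ x, x ∈ leafList s ↔ x ∈ C

def clusterSet {L : Type} (t : T L) : Set (Set L) := {C | IsCluster t C}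

/-- The tree `t` displays the rooted triple `(ab|c)`. -/
def Displays {L : Type} (t : T L) (a b c : L) : Prop :=
  a ≠ b ∧ a ≠ c ∧ b ≠ c ∧ a ∈ leafList t ∧ b ∈ leafList t ∧ c ∈ leafList t ∧
    ∃ s, Subtree s t ∧ a ∈ leafList s ∧ b ∈ leafList s ∧ c ∉ leafList s

/-- A rooted triple `(ab|c)`. -/
structure Trip (L : Type) where
  a : L
  b : L
  c : L

def Trip.proper {L : Type} (r : Trip L) : Prop := r.a ≠ r.b ∧ r.a ≠ r.c ∧ r.b ≠ r.c

def DisplaysT {L : Type} (t : T L) (r : Trip L) : Prop := Displays t r.a r.b r.c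

def DisplaysAll {L : Type} (t : T L) (R : Set (Trip L)) : Prop := ∀ r ∈ R, DisplaysT t r

def tripLeaves {L : Type} (r : Trip L) : Set L := {r.a, r.b, r.c}

/-- The leaf set `L_R` of a triple set. -/
def leafSetR {L : Type} (R : Set (Trip L)) : Set L := ⋃ r ∈ R, tripLeaves r

/-- `t` is a phylogenetic tree on the leaf set `L_R` displaying all triples of `R`. -/
def IsTreeFor {L : Type} (t : T L) (R : Set (Trip L)) : Prop :=
  PhyloTree t ∧ (∀ x, x ∈ leafList t ↔ x ∈ leafSetR R) ∧ DisplaysAll t R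

/-- `R` is consistent: some phylogenetic tree on `L_R` displays all triples of `R`. -/
def Consistent {L : Type} (R : Set (Trip L)) : Prop := ∃ t, IsTreeFor t R

/-- `R` is consistent relative to the leaf set `S`. -/
def ConsistentOn {L : Type} (R : Set (Trip L)) (S : Set L) : Prop :=
  ∃ t : T L, PhyloTree t ∧ (∀ x, x ∈ leafList t ↔ x ∈ S) ∧ DisplaysAll t R

/-- The closure of `R`: all triples displayed by every phylogenetic tree on `L_R`
displaying `R`. -/
def cl {L : Type} (R : Set (Trip L)) : Set (Trip L) :=
  {r | ∀ t : T L, IsTreeFor t R → DisplaysT t r}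

/-- Membership of the (unordered) rooted triple `(xy|z)` in `R`. -/
def MemS {L : Type} (R : Set (Trip L)) (x y z : L) : Prop :=
  Trip.mk x y z ∈ R ∨ Trip.mk y x z ∈ R

/-- All triples of `R` have pairwise distinct leaves taken from `S`. -/
def ProperOn {L : Type} (R : Set (Trip L)) (S : Set L) : Prop :=
  ∀ r ∈ R, r.a ∈ S ∧ r.b ∈ S ∧ r.c ∈ S ∧ r.proper

/-- `R` is dense on `S`: each 3-element subset of `S` carries at least one triple of `R`. -/
def DenseOn {L : Type} (R : Set (Trip L)) (S : Set L) : Prop :=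
  ProperOn R S ∧ ∀ x y z : L, x ∈ S → y ∈ S → z ∈ S → x ≠ y → x ≠ z → y ≠ z →
    (MemS R x y z ∨ MemS R x z y ∨ MemS R y z x)

/-- `R` is strictly dense on `S`: each 3-element subset of `S` carries exactly one
of the three possible rooted triples. -/
def StrictlyDense {L : Type} (R : Set (Trip L)) (S : Set L) : Prop :=
  ProperOn R S ∧ ∀ x y z : L, x ∈ S → y ∈ S → z ∈ S → x ≠ y → x ≠ z → y ≠ z →
    ((MemS R x y z ∧ ¬ MemS R x z y ∧ ¬ MemS R y z x) ∨
     (¬ MemS R x y z ∧ MemS R x z y ∧ ¬ MemS R y z x) ∨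
     (¬ MemS R x y z ∧ ¬ MemS R x z y ∧ MemS R y z x))

/-- The Aho graph `[R, S]`: vertices `S`, edges `{x,y}` for triples `(xy|z) ∈ R`
with `x,y,z ∈ S`. -/
def ahoGraph {L : Type} (R : Set (Trip L)) (S : Set L) : SimpleGraph S where
  Adj x y := x ≠ y ∧ ∃ r ∈ R, (r.c ∈ S) ∧
      ((r.a = (x : L) ∧ r.b = (y : L)) ∨ (r.a = (y : L) ∧ r.b = (x : L)))
  symm := by
    constructor
    rintro x y ⟨hxy, r, hr, hc, h⟩
    exact ⟨hxy.symm, r, hr, hc, h.symm⟩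
  loopless := by constructor; rintro x ⟨h, -⟩; exact h rfl


end Phylo

section Aux
namespace Phylo

variable {L : Type}

/-! ### Basic tree lemmas -/

/-- Custom induction principle for `T`. -/
theorem T.ind_on {motive : T L → Prop} (t : T L)
    (leaf : ∀ x, motive (T.leaf x))
    (node : ∀ ts, (∀ s ∈ ts, motive s) → motive (T.node ts)) : motive t :=
  match t with
  | T.leaf x => leaf x
  | T.node ts => node ts (fun s hs => T.ind_on s leaf node)
decreasing_by all_goals (simp_wf; have := List.sizeOf_lt_of_mem hs; omega)

theorem leafList_leaf (x : L) : leafList (T.leaf x) = [x] := by simp [leafList]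

theorem leafList_node (ts : List (T L)) :
    leafList (T.node ts) = (ts.map leafList).flatten := by
  rw [leafList]; congr 1; exact List.attach_map_val

theorem mem_leafList_node {ts : List (T L)} {v : L} :
    v ∈ leafList (T.node ts) ↔ ∃ s ∈ ts, v ∈ leafList s := by
  simp [leafList_node]

theorem subtree_leaf_subset {s t : T L} (h : Subtree s t) :
    ∀ v ∈ leafList s, v ∈ leafList t := by
  induction h with
  | refl => exact fun v hv => hv
  | child hmem _ ih =>
    intro v hv
    exact mem_leafList_node.2 ⟨_, hmem, ih v hv⟩

theorem uniq_child {α β : Type*} {f : α → List β} {ts : List α} {p q : α} {v : β}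
    (hnd : ((ts.map f).flatten).Nodup) (hp : p ∈ ts) (hq : q ∈ ts)
    (hvp : v ∈ f p) (hvq : v ∈ f q) : p = q := by
  induction ts with
  | nil => cases hp
  | cons a l ih =>
    simp only [List.map_cons, List.flatten_cons, List.nodup_append] at hnd
    obtain ⟨-, hnd2, hdisj⟩ := hnd
    rcases List.mem_cons.1 hp with rfl | hp' <;> rcases List.mem_cons.1 hq with rfl | hq'
    · rfl
    · exact absurd (hdisj v hvp v (List.mem_flatten.2 ⟨f q, List.mem_map.2 ⟨q, hq', rfl⟩, hvq⟩))
        (by simp)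
    · exact absurd (hdisj v hvq v (List.mem_flatten.2 ⟨f p, List.mem_map.2 ⟨p, hp', rfl⟩, hvp⟩))
        (by simp)
    · exact ih hnd2 hp' hq'

theorem nodup_child {α β : Type*} {f : α → List β} {ts : List α} {p : α}
    (hnd : ((ts.map f).flatten).Nodup) (hp : p ∈ ts) : (f p).Nodup := by
  induction ts with
  | nil => cases hp
  | cons a l ih =>
    simp only [List.map_cons, List.flatten_cons, List.nodup_append] at hnd
    rcases List.mem_cons.1 hp with rfl | hp'
    · exact hnd.1
    · exact ih hnd.2.1 hp'

/-- Two subtrees of a duplicate-free tree sharing a leaf are nested. -/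
theorem nested {t s1 : T L} (h1 : Subtree s1 t) :
    ∀ {s2 : T L}, Subtree s2 t → (leafList t).Nodup →
    ∀ {v : L}, v ∈ leafList s1 → v ∈ leafList s2 →
    (∀ u ∈ leafList s1, u ∈ leafList s2) ∨ (∀ u ∈ leafList s2, u ∈ leafList s1) := by
  induction h1 with
  | refl t => intro s2 h2 _ v _ _; exact Or.inr (subtree_leaf_subset h2)
  | @child p s1 ts hmem hsub ih =>
    intro s2 h2 hnd v hv1 hv2
    cases h2 with
    | refl => exact Or.inl (subtree_leaf_subset (Subtree.child hmem hsub))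
    | @child q s2' _ hqmem hqsub =>
      rw [leafList_node] at hnd
      have hvp : v ∈ leafList p := subtree_leaf_subset hsub v hv1
      have hvq : v ∈ leafList q := subtree_leaf_subset hqsub v hv2
      have hpq : p = q := uniq_child hnd hmem hqmem hvp hvq
      subst hpq
      exact ih hqsub (nodup_child hnd hmem) hv1 hv2

theorem displays_comm {t : T L} {x y c : L} (h : Displays t x y c) : Displays t y x c := by
  obtain ⟨h1, h2, h3, h4, h5, h6, s, hs, ha, hb, hc⟩ := h
  exact ⟨h1.symm, h3, h2, h5, h4, h6, s, hs, hb, ha, hc⟩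

theorem displays_antisym1 {t : T L} (hnd : (leafList t).Nodup) {a b c : L}
    (h1 : Displays t a b c) (h2 : Displays t a c b) : False := by
  obtain ⟨-, -, -, -, -, -, s1, hs1, ha1, hb1, hc1⟩ := h1
  obtain ⟨-, -, -, -, -, -, s2, hs2, ha2, hb2, hc2⟩ := h2
  rcases nested hs1 hs2 hnd ha1 ha2 with h | h
  · exact hc2 (h b hb1)
  · exact hc1 (h c hb2)

theorem displays_antisym2 {t : T L} (hnd : (leafList t).Nodup) {a b c : L}
    (h1 : Displays t a b c) (h2 : Displays t b c a) : False := by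
  obtain ⟨-, -, -, -, -, -, s1, hs1, ha1, hb1, hc1⟩ := h1
  obtain ⟨-, -, -, -, -, -, s2, hs2, ha2, hb2, hc2⟩ := h2
  rcases nested hs1 hs2 hnd hb1 ha2 with h | h
  · exact hc2 (h a ha1)
  · exact hc1 (h c hb2)

/-! ### Restriction of trees -/

open scoped Classical in
/-- Restriction of a tree to a leaf set, suppressing degree-one vertices. -/
noncomputable def restrict (L' : Set L) : T L → Option (T L)
  | T.leaf x => if x ∈ L' then some (T.leaf x) else none
  | T.node ts =>
    match (ts.attach.map fun s => restrict L' s.1).reduceOption with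
    | [] => none
    | [c] => some c
    | c :: c' :: cs => some (T.node (c :: c' :: cs))
decreasing_by all_goals (simp_wf; have := List.sizeOf_lt_of_mem s.2; omega)

open scoped Classical in
theorem restrict_leaf (L' : Set L) (x : L) :
    restrict L' (T.leaf x) = if x ∈ L' then some (T.leaf x) else none := by
  rw [restrict]

theorem restrict_node (L' : Set L) (ts : List (T L)) :
    restrict L' (T.node ts) =
      match (ts.map (restrict L')).reduceOption with
      | [] => none
      | [c] => some c
      | c :: c' :: cs => some (T.node (c :: c' :: cs)) := by
  rw [restrict]
  congr 1
  congr 1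
  exact List.attach_map_val

/-- Leaf list of an optional tree. -/
def gl : Option (T L) → List L := fun o => o.elim [] leafList

theorem red_map_flat (os : List (Option (T L))) :
    ((os.reduceOption).map leafList).flatten = (os.map gl).flatten := by
  induction os with
  | nil => rfl
  | cons o l ih =>
    cases o with
    | none => simpa [gl] using ih
    | some t => simp [gl, ih]

open scoped Classical in
theorem restrict_leafList (L' : Set L) (t : T L) :
    gl (restrict L' t) = (leafList t).filter (· ∈ L') := by
  induction t using T.ind_on with
  | leaf x =>
    rw [restrict_leaf]
    by_cases h : x ∈ L' <;> simp [h, gl, leafList_leaf]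
  | node ts ih =>
    have key : (((ts.map (restrict L')).reduceOption).map leafList).flatten
        = (leafList (T.node ts)).filter (· ∈ L') := by
      rw [red_map_flat, leafList_node, List.filter_flatten, List.map_map, List.map_map]
      congr 1
      apply List.map_congr_left
      intro s hs
      exact ih s hs
    rw [restrict_node]
    rcases hred : (ts.map (restrict L')).reduceOption with _ | ⟨c, _ | ⟨c', cs⟩⟩ <;>
      rw [hred] at key
    · simpa [gl] using key
    · simpa [gl] using key
    · rw [← key]; simp [gl, leafList_node]

open scoped Classical in
theorem restrict_some_leafList {L' : Set L} {t t' : T L} (h : restrict L' t = some t') :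
    leafList t' = (leafList t).filter (· ∈ L') := by
  have h2 := restrict_leafList L' t
  rw [h] at h2
  exact h2

open scoped Classical in
theorem restrict_eq_none {L' : Set L} {t : T L} (h : restrict L' t = none) :
    (leafList t).filter (· ∈ L') = [] := by
  have h2 := restrict_leafList L' t
  rw [h] at h2
  exact h2.symm

theorem restrict_isSome {L' : Set L} {t : T L} {v : L} (hv : v ∈ leafList t)
    (hv' : v ∈ L') : ∃ t', restrict L' t = some t' := by
  classical
  cases h : restrict L' t with
  | none =>
    exfalso
    have h2 := restrict_eq_none h
    have h3 : v ∈ (leafList t).filter (· ∈ L') := by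
      rw [List.mem_filter]
      exact ⟨hv, by simpa using hv'⟩
    rw [h2] at h3
    cases h3
  | some t' => exact ⟨t', rfl⟩

theorem mem_restrict_children {L' : Set L} {ts : List (T L)} {c : T L} :
    c ∈ (ts.map (restrict L')).reduceOption ↔ ∃ s ∈ ts, restrict L' s = some c := by
  simp [List.reduceOption_mem_iff]

theorem restrict_phylo {L' : Set L} {t : T L} (hp : IsPhylo t) :
    ∀ {t' : T L}, restrict L' t = some t' → IsPhylo t' := by
  induction t using T.ind_on with
  | leaf x =>
    intro t' h
    rw [restrict_leaf] at h
    by_cases hx : x ∈ L'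
    · simp only [hx, if_pos] at h
      cases h
      exact IsPhylo.leaf x
    · simp [hx] at h
  | node ts ih =>
    intro t' h
    have hch : ∀ c ∈ (ts.map (restrict L')).reduceOption, IsPhylo c := by
      intro c hc
      obtain ⟨s, hs, hsc⟩ := mem_restrict_children.1 hc
      cases hp with
      | node _ hall => exact ih s hs (hall s hs) hsc
    rw [restrict_node] at h
    rcases hred : (ts.map (restrict L')).reduceOption with _ | ⟨c, _ | ⟨c', cs⟩⟩ <;>
      rw [hred] at h <;> rw [hred] at hch
    · cases h
    · cases h
      exact hch _ (by simp)
    · cases h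
      exact IsPhylo.node (by simp) hch

theorem restrict_nonempty {L' : Set L} {t : T L} :
    ∀ {t' : T L}, restrict L' t = some t' → ∃ v, v ∈ leafList t' := by
  induction t using T.ind_on with
  | leaf x =>
    intro t' h
    rw [restrict_leaf] at h
    by_cases hx : x ∈ L'
    · simp only [hx, if_pos] at h
      cases h
      exact ⟨x, by simp [leafList_leaf]⟩
    · simp [hx] at h
  | node ts ih =>
    intro t' h
    rw [restrict_node] at h
    rcases hred : (ts.map (restrict L')).reduceOption with _ | ⟨c, _ | ⟨c', cs⟩⟩ <;>
      rw [hred] at h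
    · cases h
    · cases h
      have hc : t' ∈ (ts.map (restrict L')).reduceOption := by rw [hred]; simp
      obtain ⟨s, hs, hsc⟩ := mem_restrict_children.1 hc
      exact ih s hs hsc
    · cases h
      have hc : c ∈ (ts.map (restrict L')).reduceOption := by rw [hred]; simp
      obtain ⟨s, hs, hsc⟩ := mem_restrict_children.1 hc
      obtain ⟨v, hv⟩ := ih s hs hsc
      exact ⟨v, mem_leafList_node.2 ⟨c, by simp, hv⟩⟩

theorem restrict_subtree_fwd {L' : Set L} {s t : T L} (h : Subtree s t) :
    ∀ {s' t' : T L}, restrict L' s = some s' → restrict L' t = some t' → Subtree s' t' := by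
  classical
  induction h with
  | refl t =>
    intro s' t' h1 h2
    rw [h1] at h2
    cases h2
    exact Subtree.refl _
  | @child p u ts hmem hsub ih =>
    intro u' t' hu ht
    obtain ⟨v, hv⟩ := restrict_nonempty hu
    rw [restrict_some_leafList hu, List.mem_filter] at hv
    obtain ⟨hvu, hvL⟩ := hv
    have hvp : v ∈ leafList p := subtree_leaf_subset hsub v hvu
    obtain ⟨p', hp'⟩ := restrict_isSome hvp (by simpa using hvL)
    have hsub' : Subtree u' p' := ih hu hp'
    have hmem' : p' ∈ (ts.map (restrict L')).reduceOption :=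
      mem_restrict_children.2 ⟨p, hmem, hp'⟩
    rw [restrict_node] at ht
    rcases hred : (ts.map (restrict L')).reduceOption with _ | ⟨c, _ | ⟨c', cs⟩⟩ <;>
      rw [hred] at ht <;> rw [hred] at hmem'
    · cases ht
    · cases ht
      simp only [List.mem_singleton] at hmem'
      rw [← hmem']
      exact hsub'
    · cases ht
      exact Subtree.child hmem' hsub'

theorem restrict_subtree_bwd {L' : Set L} {t : T L} :
    ∀ {t' : T L}, restrict L' t = some t' → ∀ {s' : T L}, Subtree s' t' →
      ∃ s, Subtree s t ∧ restrict L' s = some s' := by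
  induction t using T.ind_on with
  | leaf x =>
    intro t' h s' hs
    rw [restrict_leaf] at h
    by_cases hx : x ∈ L'
    · simp only [hx, if_pos] at h
      cases h
      cases hs
      exact ⟨T.leaf x, Subtree.refl _, by rw [restrict_leaf]; simp [hx]⟩
    · simp [hx] at h
  | node ts ih =>
    intro t' h s' hs
    rw [restrict_node] at h
    rcases hred : (ts.map (restrict L')).reduceOption with _ | ⟨c, _ | ⟨c', cs⟩⟩ <;>
      rw [hred] at h
    · cases h
    · cases h
      have hc : t' ∈ (ts.map (restrict L')).reduceOption := by rw [hred]; simp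
      obtain ⟨s0, hs0, h0⟩ := mem_restrict_children.1 hc
      obtain ⟨s, hsub, hres⟩ := ih s0 hs0 h0 hs
      exact ⟨s, Subtree.child hs0 hsub, hres⟩
    · cases h
      cases hs with
      | refl => exact ⟨T.node ts, Subtree.refl _, by rw [restrict_node, hred]⟩
      | @child q _ _ hqmem hqsub =>
        have hq : q ∈ (ts.map (restrict L')).reduceOption := by rw [hred]; exact hqmem
        obtain ⟨s0, hs0, h0⟩ := mem_restrict_children.1 hq
        obtain ⟨s, hsub, hres⟩ := ih s0 hs0 h0 hqsub
        exact ⟨s, Subtree.child hs0 hsub, hres⟩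

open scoped Classical in
theorem restrict_displays_fwd {L' : Set L} {t t' : T L} (h : restrict L' t = some t')
    {a b c : L} (hd : Displays t a b c) (ha : a ∈ L') (hb : b ∈ L') (hc : c ∈ L') :
    Displays t' a b c := by
  obtain ⟨h1, h2, h3, hat, hbt, hct, s, hst, has, hbs, hcs⟩ := hd
  obtain ⟨s', hres⟩ := restrict_isSome has ha
  have hsub' : Subtree s' t' := restrict_subtree_fwd hst hres h
  have hls : leafList s' = (leafList s).filter (· ∈ L') := restrict_some_leafList hres
  have hlt : leafList t' = (leafList t).filter (· ∈ L') := restrict_some_leafList h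
  refine ⟨h1, h2, h3, ?_, ?_, ?_, s', hsub', ?_, ?_, ?_⟩
  · rw [hlt, List.mem_filter]; exact ⟨hat, by simpa using ha⟩
  · rw [hlt, List.mem_filter]; exact ⟨hbt, by simpa using hb⟩
  · rw [hlt, List.mem_filter]; exact ⟨hct, by simpa using hc⟩
  · rw [hls, List.mem_filter]; exact ⟨has, by simpa using ha⟩
  · rw [hls, List.mem_filter]; exact ⟨hbs, by simpa using hb⟩
  · rw [hls, List.mem_filter]
    intro hmem
    exact hcs hmem.1

open scoped Classical in
theorem restrict_displays_bwd {L' : Set L} {t t' : T L} (h : restrict L' t = some t')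
    {a b c : L} (hd : Displays t' a b c) : Displays t a b c := by
  obtain ⟨h1, h2, h3, hat, hbt, hct, s', hst, has, hbs, hcs⟩ := hd
  obtain ⟨s, hsub, hres⟩ := restrict_subtree_bwd h hst
  have hls : leafList s' = (leafList s).filter (· ∈ L') := restrict_some_leafList hres
  have hlt : leafList t' = (leafList t).filter (· ∈ L') := restrict_some_leafList h
  rw [hlt, List.mem_filter] at hat hbt hct
  rw [hls, List.mem_filter] at has hbs
  refine ⟨h1, h2, h3, hat.1, hbt.1, hct.1, s, hsub, has.1, hbs.1, ?_⟩
  intro hmem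
  apply hcs
  rw [hls, List.mem_filter]
  exact ⟨hmem, hct.2⟩

end Phylo
end Aux

section Aux2
namespace Phylo

variable {L : Type}

theorem memS_spec {R : Set (Trip L)} {S : Set L} (hP : ProperOn R S) {x y z : L}
    (h : MemS R x y z) :
    x ∈ S ∧ y ∈ S ∧ z ∈ S ∧ x ≠ y ∧ x ≠ z ∧ y ≠ z := by
  rcases h with h | h
  · obtain ⟨ha, hb, hc, hp⟩ := hP _ h
    have hp' : x ≠ y ∧ x ≠ z ∧ y ≠ z := hp
    exact ⟨ha, hb, hc, hp'.1, hp'.2.1, hp'.2.2⟩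
  · obtain ⟨ha, hb, hc, hp⟩ := hP _ h
    have hp' : y ≠ x ∧ y ≠ z ∧ x ≠ z := hp
    exact ⟨hb, ha, hc, hp'.1.symm, hp'.2.2, hp'.2.1⟩

theorem memS_comm {R : Set (Trip L)} {x y z : L} (h : MemS R x y z) : MemS R y x z :=
  h.symm

theorem sd_unique {R : Set (Trip L)} {S : Set L} (hsd : StrictlyDense R S) {x y z : L}
    (h : MemS R x y z) : ¬ MemS R x z y ∧ ¬ MemS R y z x := by
  obtain ⟨hx, hy, hz, hxy, hxz, hyz⟩ := memS_spec hsd.1 h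
  rcases hsd.2 x y z hx hy hz hxy hxz hyz with ⟨-, h2, h3⟩ | ⟨h1, -, -⟩ | ⟨h1, -, -⟩
  · exact ⟨h2, h3⟩
  · exact absurd h h1
  · exact absurd h h1

theorem memS_elim {R : Set (Trip L)} {x y c : L} (h : MemS R x y c) :
    ∃ r ∈ R, r.c = c ∧ ∀ t : T L, DisplaysT t r → Displays t x y c := by
  rcases h with h | h
  · exact ⟨Trip.mk x y c, h, rfl, fun t ht => ht⟩
  · exact ⟨Trip.mk y x c, h, rfl, fun t ht => displays_comm ht⟩

theorem H_apply {R : Set (Trip L)}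
    (H : ∀ R' ⊆ R, R'.ncard = 2 → ∀ r ∈ cl R', MemS R r.a r.b r.c)
    {r1 r2 : Trip L} (h1 : r1 ∈ R) (h2 : r2 ∈ R) (hne : r1 ≠ r2) (x y z : L)
    (hder : ∀ t : T L, (leafList t).Nodup → DisplaysT t r1 → DisplaysT t r2 →
      Displays t x y z) :
    MemS R x y z := by
  have hsub : {r1, r2} ⊆ R := by
    intro r hr
    rcases Set.mem_insert_iff.1 hr with rfl | hr
    · exact h1
    · exact Set.mem_singleton_iff.1 hr ▸ h2
  have hcl : Trip.mk x y z ∈ cl {r1, r2} := by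
    intro t ht
    exact hder t ht.1.2 (ht.2.2 r1 (Set.mem_insert _ _))
      (ht.2.2 r2 (Set.mem_insert_of_mem _ rfl))
  exact H {r1, r2} hsub (Set.ncard_pair hne) (Trip.mk x y z) hcl

theorem ruleA {R : Set (Trip L)} {S : Set L} (hsd : StrictlyDense R S)
    (H : ∀ R' ⊆ R, R'.ncard = 2 → ∀ r ∈ cl R', MemS R r.a r.b r.c)
    {x y c d : L} (h1 : MemS R x y c) (h2 : MemS R x c d) :
    MemS R x y d ∧ MemS R y c d := by
  obtain ⟨hxS, hyS, hcS, hxy, hxc, hyc⟩ := memS_spec hsd.1 h1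
  obtain ⟨-, -, hdS, -, hxd, hcd⟩ := memS_spec hsd.1 h2
  by_cases hyd : y = d
  · subst hyd
    exact absurd h2 (sd_unique hsd h1).1
  obtain ⟨r1, hr1, hcc1, hd1⟩ := memS_elim h1
  obtain ⟨r2, hr2, hcc2, hd2⟩ := memS_elim h2
  have hne : r1 ≠ r2 := fun he => hcd (by rw [← hcc1, he, hcc2])
  have key : ∀ t : T L, (leafList t).Nodup → DisplaysT t r1 → DisplaysT t r2 →
      Displays t x y d ∧ Displays t y c d := by
    intro t hnd ht1 ht2
    obtain ⟨-, -, -, hxt, hyt, hct, s1, hs1, ha1, hb1, hc1'⟩ := hd1 t ht1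
    obtain ⟨-, -, -, -, -, hdt, s2, hs2, ha2, hb2, hc2'⟩ := hd2 t ht2
    rcases nested hs1 hs2 hnd ha1 ha2 with hss | hss
    · exact ⟨⟨hxy, hxd, hyd, hxt, hyt, hdt, s2, hs2, ha2, hss y hb1, hc2'⟩,
        ⟨hyc, hyd, hcd, hyt, hct, hdt, s2, hs2, hss y hb1, hb2, hc2'⟩⟩
    · exact absurd (hss c hb2) hc1'
  constructor
  · exact H_apply H hr1 hr2 hne x y d (fun t hnd a b => (key t hnd a b).1)
  · exact H_apply H hr1 hr2 hne y c d (fun t hnd a b => (key t hnd a b).2)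

theorem ruleB {R : Set (Trip L)} {S : Set L} (hsd : StrictlyDense R S)
    (H : ∀ R' ⊆ R, R'.ncard = 2 → ∀ r ∈ cl R', MemS R r.a r.b r.c)
    {x b c e : L} (h1 : MemS R x b c) (h2 : MemS R b c e) : MemS R x c e := by
  obtain ⟨hxS, hbS, hcS, hxb, hxc, hbc⟩ := memS_spec hsd.1 h1
  obtain ⟨-, -, heS, -, hbe, hce⟩ := memS_spec hsd.1 h2
  by_cases hex : e = x
  · subst hex
    exact absurd h2 (sd_unique hsd h1).2
  obtain ⟨r1, hr1, hcc1, hd1⟩ := memS_elim h1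
  obtain ⟨r2, hr2, hcc2, hd2⟩ := memS_elim h2
  have hne : r1 ≠ r2 := fun he => hce (by rw [← hcc1, he, hcc2])
  refine H_apply H hr1 hr2 hne x c e ?_
  intro t hnd ht1 ht2
  obtain ⟨-, -, -, hxt, hbt, hct, s1, hs1, ha1, hb1, hc1'⟩ := hd1 t ht1
  obtain ⟨-, -, -, -, -, het, s2, hs2, ha2, hb2, hc2'⟩ := hd2 t ht2
  rcases nested hs1 hs2 hnd hb1 ha2 with hss | hss
  · exact ⟨hxc, fun h => hex h.symm, hce, hxt, hct, het, s2, hs2, hss x ha1, hb2, hc2'⟩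
  · exact absurd (hss c hb2) hc1'

theorem ruleC {R : Set (Trip L)} {S : Set L} (hsd : StrictlyDense R S)
    (H : ∀ R' ⊆ R, R'.ncard = 2 → ∀ r ∈ cl R', MemS R r.a r.b r.c)
    {x b c w : L} (h1 : MemS R x b w) (h2 : MemS R b c x) : MemS R x c w := by
  obtain ⟨hxS, hbS, hwS, hxb, hxw, hbw⟩ := memS_spec hsd.1 h1
  obtain ⟨-, hcS, -, hbc, hbx, hcx⟩ := memS_spec hsd.1 h2
  by_cases hwc : w = c
  · subst hwc
    exact absurd h2 (sd_unique hsd h1).2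
  obtain ⟨r1, hr1, hcc1, hd1⟩ := memS_elim h1
  obtain ⟨r2, hr2, hcc2, hd2⟩ := memS_elim h2
  have hne : r1 ≠ r2 := by
    intro he
    have hwx : w = x := by rw [← hcc1, he, hcc2]
    exact hxw hwx.symm
  refine H_apply H hr1 hr2 hne x c w ?_
  intro t hnd ht1 ht2
  obtain ⟨-, -, -, hxt, hbt, hwt, s1, hs1, ha1, hb1, hc1'⟩ := hd1 t ht1
  obtain ⟨-, -, -, -, hct, -, s2, hs2, ha2, hb2, hc2'⟩ := hd2 t ht2
  rcases nested hs1 hs2 hnd hb1 ha2 with hss | hss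
  · exact absurd (hss x ha1) hc2'
  · exact ⟨hcx.symm, hxw, fun h => hwc h.symm, hxt, hct, hwt, s1, hs1, ha1, hss c hb2, hc1'⟩

/-- Aho adjacency relation on vertex set `S'`. -/
def AdjR (R : Set (Trip L)) (S' : Set L) (u v : L) : Prop :=
  u ∈ S' ∧ v ∈ S' ∧ ∃ w ∈ S', MemS R u v w

theorem adjR_symm {R : Set (Trip L)} {S' : Set L} {u v : L} (h : AdjR R S' u v) :
    AdjR R S' v u := by
  obtain ⟨h1, h2, w, hw, hm⟩ := h
  exact ⟨h2, h1, w, hw, memS_comm hm⟩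

theorem reach_adj {R : Set (Trip L)} {S : Set L} (hsd : StrictlyDense R S)
    (H : ∀ R' ⊆ R, R'.ncard = 2 → ∀ r ∈ cl R', MemS R r.a r.b r.c)
    {S' : Set L} (hS' : S' ⊆ S) {x v : L}
    (h : Relation.ReflTransGen (AdjR R S') x v) :
    v = x ∨ ∃ w ∈ S', MemS R x v w := by
  induction h with
  | refl => exact Or.inl rfl
  | @tail b c hxb hbc ih =>
    rcases ih with rfl | ⟨w1, hw1, hm1⟩
    · exact Or.inr hbc.2.2
    · obtain ⟨hbS', hcS', w2, hw2, hm2⟩ := hbc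
      by_cases hcx : c = x
      · exact Or.inl hcx
      right
      obtain ⟨hxS, hbS, -, hxb', -, -⟩ := memS_spec hsd.1 hm1
      obtain ⟨-, -, -, hbc', -, -⟩ := memS_spec hsd.1 hm2
      have hxc : x ≠ c := fun h => hcx h.symm
      rcases hsd.2 x b c hxS hbS (hS' hcS') hxb' hxc hbc' with ⟨hm, -, -⟩ | ⟨-, hm, -⟩ |
        ⟨-, -, hm⟩
      · exact ⟨w2, hw2, ruleB hsd H hm hm2⟩
      · exact ⟨b, hbS', hm⟩
      · exact ⟨w1, hw1, ruleC hsd H hm1 hm⟩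

theorem not_all_reach {R : Set (Trip L)} {S : Set L} (hsd : StrictlyDense R S)
    (H : ∀ R' ⊆ R, R'.ncard = 2 → ∀ r ∈ cl R', MemS R r.a r.b r.c)
    {S' : Set L} (hS' : S' ⊆ S) (hfin' : S'.Finite) {x y : L}
    (hx : x ∈ S') (hy : y ∈ S') (hxy : y ≠ x) :
    ∃ z ∈ S', ¬ Relation.ReflTransGen (AdjR R S') x z := by
  by_contra hcon
  push_neg at hcon
  haveI : Nonempty L := ⟨x⟩
  have edge : ∀ v, v ∈ S' → v ≠ x → ∃ w, w ∈ S' ∧ MemS R x v w := by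
    intro v hv hvx
    rcases reach_adj hsd H hS' (hcon v hv) with h | ⟨w, hw, hm⟩
    · exact absurd h hvx
    · exact ⟨w, hw, hm⟩
  classical
  let f : ℕ → L := fun n => Nat.rec y
    (fun _ p => Classical.epsilon (fun w => w ∈ S' ∧ MemS R x p w)) n
  have hfs : ∀ n, f (n + 1) = Classical.epsilon (fun w => w ∈ S' ∧ MemS R x (f n) w) :=
    fun n => rfl
  have inv : ∀ n, f n ∈ S' ∧ f n ≠ x ∧ ∀ i, i < n → MemS R x (f i) (f n) := by
    intro n
    induction n with
    | zero => exact ⟨hy, hxy, fun i h => absurd h (Nat.not_lt_zero i)⟩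
    | succ n ih =>
      obtain ⟨hmem, hnex, hprev⟩ := ih
      have hspec : f (n + 1) ∈ S' ∧ MemS R x (f n) (f (n + 1)) := by
        rw [hfs n]
        exact Classical.epsilon_spec (edge (f n) hmem hnex)
      have hxne : f (n + 1) ≠ x :=
        fun h => (memS_spec hsd.1 hspec.2).2.2.2.2.1 h.symm
      refine ⟨hspec.1, hxne, ?_⟩
      intro i hi
      rcases Nat.lt_succ_iff_lt_or_eq.1 hi with hi' | rfl
      · exact (ruleA hsd H (hprev i hi') hspec.2).1
      · exact hspec.2
  have hinj : Function.Injective f := by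
    intro i j hij
    by_contra hne
    rcases lt_or_gt_of_ne hne with h | h
    · exact (memS_spec hsd.1 ((inv j).2.2 i h)).2.2.2.2.2 hij
    · exact (memS_spec hsd.1 ((inv i).2.2 j h)).2.2.2.2.2 hij.symm
  exact (Set.infinite_of_injective_forall_mem hinj (fun n => (inv n).1)) hfin'

theorem displays_lift {t1 : T L} {ts : List (T L)} (h : t1 ∈ ts) {a b c : L}
    (hd : Displays t1 a b c) (hc : c ∈ leafList (T.node ts)) :
    Displays (T.node ts) a b c := by
  obtain ⟨h1, h2, h3, h4, h5, h6, s, hs, ha, hb, hcn⟩ := hd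
  exact ⟨h1, h2, h3, mem_leafList_node.2 ⟨t1, h, h4⟩, mem_leafList_node.2 ⟨t1, h, h5⟩,
    hc, s, Subtree.child h hs, ha, hb, hcn⟩

theorem build {R : Set (Trip L)} {S : Set L} (hsd : StrictlyDense R S)
    (H : ∀ R' ⊆ R, R'.ncard = 2 → ∀ r ∈ cl R', MemS R r.a r.b r.c) :
    ∀ (n : ℕ) (S' : Set L), S' ⊆ S → S'.Finite → S'.ncard = n → S'.Nonempty →
    ∃ t : T L, IsPhylo t ∧ (leafList t).Nodup ∧ (∀ v, v ∈ leafList t ↔ v ∈ S') ∧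
      (∀ r ∈ R, r.a ∈ S' → r.b ∈ S' → r.c ∈ S' → DisplaysT t r) := by
  intro n
  induction n using Nat.strong_induction_on with
  | _ n ih =>
  intro S' hS'S hfin' hcard' hne'
  obtain ⟨x, hx⟩ := hne'
  by_cases hsingle : ∀ v ∈ S', v = x
  · refine ⟨T.leaf x, IsPhylo.leaf x, by simp [leafList_leaf], ?_, ?_⟩
    · intro v
      rw [leafList_leaf]
      simp only [List.mem_singleton]
      exact ⟨fun h => h ▸ hx, fun h => hsingle v h⟩
    · intro r hr ha hb hc
      exfalso
      obtain ⟨-, -, -, hp⟩ := hsd.1 r hr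
      exact hp.1 ((hsingle _ ha).trans (hsingle _ hb).symm)
  · push_neg at hsingle
    obtain ⟨y, hy, hyx⟩ := hsingle
    obtain ⟨z, hz, hzr⟩ := not_all_reach hsd H hS'S hfin' hx hy hyx
    set S1 : Set L := {v | v ∈ S' ∧ Relation.ReflTransGen (AdjR R S') x v} with hS1def
    set S2 : Set L := S' \ S1 with hS2def
    have hS1sub : S1 ⊆ S' := fun v hv => hv.1
    have hS2sub : S2 ⊆ S' := fun v hv => hv.1
    have hxS1 : x ∈ S1 := ⟨hx, Relation.ReflTransGen.refl⟩
    have hzS2 : z ∈ S2 := ⟨hz, fun h => hzr h.2⟩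
    have hclosed : ∀ u v, u ∈ S1 → AdjR R S' u v → v ∈ S1 :=
      fun u v hu hadj => ⟨hadj.2.1, hu.2.tail hadj⟩
    have hzn1 : z ∉ S1 := hzS2.2
    have hxn2 : x ∉ S2 := fun h => h.2 hxS1
    have hfin1 : S1.Finite := hfin'.subset hS1sub
    have hfin2 : S2.Finite := hfin'.subset hS2sub
    have hlt1 : S1.ncard < n := by
      rw [← hcard']
      exact Set.ncard_lt_ncard ⟨hS1sub, fun h => hzn1 (h hz)⟩ hfin'
    have hlt2 : S2.ncard < n := by
      rw [← hcard']
      exact Set.ncard_lt_ncard ⟨hS2sub, fun h => hxn2 (h hx)⟩ hfin'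
    obtain ⟨t1, hp1, hnd1, hm1, hd1⟩ :=
      ih S1.ncard hlt1 S1 (hS1sub.trans hS'S) hfin1 rfl ⟨x, hxS1⟩
    obtain ⟨t2, hp2, hnd2, hm2, hd2⟩ :=
      ih S2.ncard hlt2 S2 (hS2sub.trans hS'S) hfin2 rfl ⟨z, hzS2⟩
    have hmem : ∀ v, v ∈ leafList (T.node [t1, t2]) ↔ v ∈ leafList t1 ∨ v ∈ leafList t2 := by
      intro v
      rw [mem_leafList_node]
      simp
    have hdisj12 : ∀ v, v ∈ leafList t1 → v ∈ leafList t2 → False := by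
      intro v h1 h2
      exact ((hm2 v).1 h2).2 ((hm1 v).1 h1)
    refine ⟨T.node [t1, t2], ?_, ?_, ?_, ?_⟩
    · refine IsPhylo.node (by simp) ?_
      intro t ht
      rcases List.mem_cons.1 ht with rfl | ht
      · exact hp1
      rcases List.mem_cons.1 ht with rfl | ht
      · exact hp2
      · cases ht
    · rw [leafList_node]
      simp only [List.map_cons, List.map_nil, List.flatten_cons, List.flatten_nil,
        List.append_nil]
      exact hnd1.append hnd2 (fun v h1 h2 => hdisj12 v h1 h2)
    · intro v
      rw [hmem v, hm1 v, hm2 v]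
      constructor
      · rintro (h | h)
        · exact hS1sub h
        · exact hS2sub h
      · intro hv
        by_cases h1 : v ∈ S1
        · exact Or.inl h1
        · exact Or.inr ⟨hv, h1⟩
    · rintro ⟨a, b, c⟩ hr ha hb hc
      obtain ⟨-, -, -, hp⟩ := hsd.1 _ hr
      have hp' : a ≠ b ∧ a ≠ c ∧ b ≠ c := hp
      have hadj : AdjR R S' a b := ⟨ha, hb, c, hc, Or.inl hr⟩
      have hmt1 : t1 ∈ [t1, t2] := by simp
      have hmt2 : t2 ∈ [t1, t2] := by simp
      by_cases haS1 : a ∈ S1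
      · have hbS1 : b ∈ S1 := hclosed a b haS1 hadj
        by_cases hcS1 : c ∈ S1
        · exact displays_lift hmt1 (hd1 _ hr haS1 hbS1 hcS1)
            ((hmem c).2 (Or.inl ((hm1 c).2 hcS1)))
        · refine ⟨hp'.1, hp'.2.1, hp'.2.2, (hmem a).2 (Or.inl ((hm1 a).2 haS1)),
            (hmem b).2 (Or.inl ((hm1 b).2 hbS1)),
            (hmem c).2 (Or.inr ((hm2 c).2 ⟨hc, hcS1⟩)), t1,
            Subtree.child hmt1 (Subtree.refl t1), (hm1 a).2 haS1, (hm1 b).2 hbS1, ?_⟩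
          intro hcl
          exact hcS1 ((hm1 c).1 hcl)
      · have haS2 : a ∈ S2 := ⟨ha, haS1⟩
        have hbS2 : b ∈ S2 := by
          refine ⟨hb, fun hbS1 => haS1 (hclosed b a hbS1 (adjR_symm hadj))⟩
        by_cases hcS2 : c ∈ S2
        · exact displays_lift hmt2 (hd2 _ hr haS2 hbS2 hcS2)
            ((hmem c).2 (Or.inr ((hm2 c).2 hcS2)))
        · have hcS1 : c ∈ S1 := by
            by_contra h1
            exact hcS2 ⟨hc, h1⟩
          refine ⟨hp'.1, hp'.2.1, hp'.2.2, (hmem a).2 (Or.inr ((hm2 a).2 haS2)),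
            (hmem b).2 (Or.inr ((hm2 b).2 hbS2)),
            (hmem c).2 (Or.inl ((hm1 c).2 hcS1)), t2,
            Subtree.child hmt2 (Subtree.refl t2), (hm2 a).2 haS2, (hm2 b).2 hbS2, ?_⟩
          intro hcl
          exact hcS2 ⟨hc, fun h1 => hdisj12 c ((hm1 c).2 h1) hcl⟩
end Phylo
end Aux2


open Phylo in
/-- A strictly dense set `R` of rooted triples on a leaf set `L` with `|L| ≥ 3`
is consistent if and only if for every two-element subset `R' ⊆ R` the closure
`cl(R')` is contained in `R`. -/
theorem strictly_dense_consistent_iff {L : Type} (S : Set L)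
    (hfin : S.Finite) (hcard : 3 ≤ S.ncard)
    (R : Set (Trip L)) (hsd : StrictlyDense R S) :
    ConsistentOn R S ↔
      ∀ R' ⊆ R, R'.ncard = 2 → ∀ r ∈ cl R', MemS R r.a r.b r.c := by
  constructor
  · rintro ⟨t, ⟨hphy, hnd⟩, hleaf, hdisp⟩ R' hR'R hR'2 r hrcl
    classical
    have hR'ne : R'.Nonempty := Set.nonempty_of_ncard_ne_zero (by rw [hR'2]; omega)
    obtain ⟨r1, hr1⟩ := hR'ne
    have htrip : ∀ r0 ∈ R', r0.a ∈ leafSetR R' ∧ r0.b ∈ leafSetR R' ∧ r0.c ∈ leafSetR R' := by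
      intro r0 h0
      refine ⟨?_, ?_, ?_⟩ <;>
        · rw [leafSetR, Set.mem_iUnion₂]
          exact ⟨r0, h0, by simp [tripLeaves]⟩
    have hL'S : leafSetR R' ⊆ S := by
      intro v hv
      rw [leafSetR, Set.mem_iUnion₂] at hv
      obtain ⟨r0, hr0, hv0⟩ := hv
      obtain ⟨ha, hb, hc, -⟩ := hsd.1 r0 (hR'R hr0)
      rcases hv0 with h | h | h
      · exact h ▸ ha
      · exact h ▸ hb
      · exact h ▸ hc
    have hr1a : r1.a ∈ leafList t := (hleaf _).2 (hL'S (htrip r1 hr1).1)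
    obtain ⟨t', ht'⟩ := restrict_isSome hr1a (htrip r1 hr1).1
    have hll' : leafList t' = (leafList t).filter (· ∈ leafSetR R') :=
      restrict_some_leafList ht'
    have hmem' : ∀ v, v ∈ leafList t' ↔ v ∈ leafSetR R' := by
      intro v
      rw [hll', List.mem_filter]
      constructor
      · intro h
        simpa using h.2
      · intro h
        exact ⟨(hleaf v).2 (hL'S h), by simpa using h⟩
    have htree' : IsTreeFor t' R' := by
      refine ⟨⟨restrict_phylo hphy ht', hll' ▸ hnd.filter _⟩, hmem', ?_⟩
      intro r0 hr0
      obtain ⟨ha, hb, hc⟩ := htrip r0 hr0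
      exact restrict_displays_fwd ht' (hdisp r0 (hR'R hr0)) ha hb hc
    have hd : Displays t r.a r.b r.c := restrict_displays_bwd ht' (hrcl t' htree')
    obtain ⟨hab, hac, hbc, hat, hbt, hct, -⟩ := id hd
    have haS := (hleaf _).1 hat
    have hbS := (hleaf _).1 hbt
    have hcS := (hleaf _).1 hct
    rcases hsd.2 r.a r.b r.c haS hbS hcS hab hac hbc with ⟨h1, -, -⟩ | ⟨-, h2, -⟩ |
      ⟨-, -, h3⟩
    · exact h1
    · exfalso
      obtain ⟨r2, hr2R, -, hd2⟩ := memS_elim h2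
      exact displays_antisym1 hnd hd (hd2 t (hdisp r2 hr2R))
    · exfalso
      obtain ⟨r2, hr2R, -, hd2⟩ := memS_elim h3
      exact displays_antisym2 hnd hd (hd2 t (hdisp r2 hr2R))
  · intro H
    have hne : S.Nonempty := Set.nonempty_of_ncard_ne_zero (by omega)
    obtain ⟨t, hphy, hnd, hmem, hdisp⟩ :=
      build hsd H S.ncard S Set.Subset.rfl hfin rfl hne
    refine ⟨t, ⟨hphy, hnd⟩, hmem, ?_⟩
    intro r hr
    obtain ⟨ha, hb, hc, -⟩ := hsd.1 r hr
    exact hdisp r hr ha hb hc
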